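/- Let S be a division ring, σ an injective ring endomorphism of S, δ a left σ-derivation of S, and f ∈ S[t;σ,δ] monic of degree m. Then every left ideal of the Petit algebra S_f is a principal left ideal generated by some monic right divisor g of f in S[t;σ,δ]. -/

import Mathlib

/-- A presentation of the skew polynomial ring `S[t;σ,δ]`: a ring `R` together with a
ring homomorphism `C : S →+* R`, a distinguished element `X` (playing the role of `t`)
satisfying the twisted commutation rule `X * C a = C (σ a) * X + C (δ a)`, and such that
every element of `R` is in a unique way a finite sum `∑ C aᵢ * X ^ i`. -/
structure SkewPolyRing (S : Type*) [Ring S] (σ : S →+* S) (δ : S → S)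
    (R : Type*) [Ring R] where
  C : S →+* R
  X : R
  X_mul : ∀ a : S, X * C a = C (σ a) * X + C (δ a)
  coeff : R ≃+ (ℕ →₀ S)
  coeff_symm_apply : ∀ p : ℕ →₀ S, coeff.symm p = p.sum fun i a => C a * X ^ i

namespace SkewPolyRing

variable {S : Type*} [Ring S] {σ : S →+* S} {δ : S → S} {R : Type*} [Ring R]

/-- The degree of a skew polynomial, with `deg 0 = ⊥`. -/
noncomputable def deg (P : SkewPolyRing S σ δ R) (x : R) : WithBot ℕ :=
  (P.coeff x).support.max

/-- The leading coefficient of a skew polynomial. -/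
noncomputable def lcoeff (P : SkewPolyRing S σ δ R) (x : R) : S :=
  P.coeff x (WithBot.unbotD 0 (P.deg x))

/-- `f` is monic of degree `m`. -/
def Monic (P : SkewPolyRing S σ δ R) (f : R) (m : ℕ) : Prop :=
  P.deg f = (m : WithBot ℕ) ∧ P.coeff f m = 1

open Classical in
/-- The remainder of right division by `f`. -/
noncomputable def modr (P : SkewPolyRing S σ δ R) (f g : R) : R :=
  if h : ∃ qr : R × R, g = qr.1 * f + qr.2 ∧ P.deg qr.2 < P.deg f then
    (Classical.choose h).2
  else g

/-- The multiplication `x ∘ y = (x * y) mod_r f` of the Petit algebra `S_f`. -/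
noncomputable def pmul (P : SkewPolyRing S σ δ R) (f x y : R) : R :=
  P.modr f (x * y)

/-- The element of `S_f` with coefficient vector `c ∈ S^m`. -/
def ofVec (P : SkewPolyRing S σ δ R) {m : ℕ} (c : Fin m → S) : R :=
  ∑ i : Fin m, P.C (c i) * P.X ^ (i : ℕ)

end SkewPolyRing

/-- `δ` is a left `σ`-derivation of `S`. -/
def IsLeftSigmaDerivation {S : Type*} [Ring S] (σ : S →+* S) (δ : S → S) : Prop :=
  (∀ a b : S, δ (a + b) = δ a + δ b) ∧ ∀ a b : S, δ (a * b) = σ a * δ b + δ a * b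

namespace SkewPolyRing

variable {S : Type*} [Ring S] {σ : S →+* S} {δ : S → S} {R : Type*} [Ring R]

/-- `I` is a left ideal of the Petit algebra `S_f` (whose underlying set is
`{x | deg x < m}` with multiplication `pmul f`). -/
def IsLeftIdeal (P : SkewPolyRing S σ δ R) (f : R) (m : ℕ) (I : Set R) : Prop :=
  (∀ x ∈ I, P.deg x < (m : WithBot ℕ)) ∧ (0 : R) ∈ I ∧
    (∀ x ∈ I, ∀ y ∈ I, x + y ∈ I) ∧ (∀ x ∈ I, -x ∈ I) ∧
    ∀ a : R, P.deg a < (m : WithBot ℕ) → ∀ x ∈ I, P.pmul f a x ∈ I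

/-- The set `S_f ∘ g` of left multiples of `g` in the Petit algebra `S_f`:
the principal left ideal generated by `g`. -/
def leftMulSet (P : SkewPolyRing S σ δ R) (f : R) (m : ℕ) (g : R) : Set R :=
  {x : R | ∃ a : R, P.deg a < (m : WithBot ℕ) ∧ x = P.pmul f a g}

end SkewPolyRing

/-!
Leading terms multiply twistedly: by the rule `t^i a = σ^i(a) t^i + (lower terms)`, the
coefficient of `t^(d+e)` in `x y` is `x_d σ^d(y_e)`, which is nonzero for leading coefficients
since `S` is a division ring. So degrees add, and right division with remainder by any
nonzero `g` exists. If `I ≠ 0`, take `g ∈ I` monic of minimal degree. For `x ∈ I`, the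
remainder of `x` modulo `g` lies in `I` and has smaller degree, so it vanishes. For
`f = q g + r` with `deg g > 0`, `q` has degree `< m` and `q ∘ g = -r` in `S_f`, so `r ∈ I`
and again `r = 0`. The zero ideal is generated by `f` itself.
-/

namespace SkewPolyRing

open Polynomial

section Ring

variable {S : Type*} [Ring S] {σ : S →+* S} {δ : S → S} {R : Type*} [Ring R]
  (P : SkewPolyRing S σ δ R)

/-- The coefficient equivalence read as an additive equivalence with `S[X]`: it transports `deg`,
the coefficients and `lcoeff` to those of ordinary polynomials, but not products. -/
noncomputable def toPoly : R ≃+ S[X] :=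
  P.coeff.trans (AddMonoidAlgebra.coeffAddEquiv.symm.trans (toFinsuppIso S).symm.toAddEquiv)

theorem deg_eq_degree (x : R) : P.deg x = (P.toPoly x).degree := rfl

theorem coeff_eq_coeff_toPoly (x : R) (i : ℕ) : P.coeff x i = (P.toPoly x).coeff i := rfl

theorem lcoeff_eq_leadingCoeff (x : R) : P.lcoeff x = (P.toPoly x).leadingCoeff := rfl

theorem toPoly_eq_zero {x : R} : P.toPoly x = 0 ↔ x = 0 := map_eq_zero_iff _ P.toPoly.injective

theorem toPoly_ne_zero {x : R} (hx : x ≠ 0) : P.toPoly x ≠ 0 := P.toPoly_eq_zero.not.2 hx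

theorem deg_eq_bot {x : R} : P.deg x = ⊥ ↔ x = 0 := degree_eq_bot.trans P.toPoly_eq_zero

theorem deg_zero : P.deg (0 : R) = ⊥ := P.deg_eq_bot.2 rfl

theorem deg_zero_lt {x : R} (hx : x ≠ 0) : P.deg 0 < P.deg x :=
  P.deg_zero ▸ bot_lt_iff_ne_bot.2 (P.deg_eq_bot.not.2 hx)

theorem deg_neg (x : R) : P.deg (-x) = P.deg x := by
  rw [deg_eq_degree, map_neg, degree_neg, deg_eq_degree]

theorem deg_sub_lt {x y : R} {n : WithBot ℕ} (hx : P.deg x < n) (hy : P.deg y < n) :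
    P.deg (x - y) < n := by
  rw [deg_eq_degree, map_sub]
  exact (degree_sub_le _ _).trans_lt (max_lt hx hy)

theorem deg_sub_eq_left_of_deg_lt {x y : R} (h : P.deg y < P.deg x) : P.deg (x - y) = P.deg x := by
  rw [deg_eq_degree, map_sub]
  exact degree_sub_eq_left_of_degree_lt (p := P.toPoly x) (q := P.toPoly y) h

theorem lcoeff_ne_zero {x : R} (hx : x ≠ 0) : P.lcoeff x ≠ 0 :=
  leadingCoeff_ne_zero.2 (P.toPoly_ne_zero hx)

theorem Monic.ne_zero {f : R} {m : ℕ} (hf : P.Monic f m) : f ≠ 0 := fun h =>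
  WithBot.bot_ne_coe ((P.deg_eq_bot.2 h).symm.trans hf.1)

theorem Monic.lcoeff_eq_one {f : R} {m : ℕ} (hf : P.Monic f m) : P.lcoeff f = 1 := by
  rw [lcoeff_eq_leadingCoeff, leadingCoeff, natDegree_eq_of_degree_eq_some (p := P.toPoly f) hf.1]
  exact hf.2

theorem toPoly_C_mul_X_pow (a : S) (i : ℕ) : P.toPoly (P.C a * P.X ^ i) = monomial i a := by
  rw [← Finsupp.sum_single_index (h := fun i a => P.C a * P.X ^ i) (by simp),
    ← P.coeff_symm_apply]
  ext j
  rw [← coeff_eq_coeff_toPoly, AddEquiv.apply_symm_apply, coeff_monomial, Finsupp.single_apply]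

theorem sum_C_mul_X_pow_eq (x : R) :
    ∑ i ∈ (P.toPoly x).support, P.C ((P.toPoly x).coeff i) * P.X ^ i = x := by
  apply P.toPoly.injective
  simp only [map_sum, toPoly_C_mul_X_pow]
  exact (as_sum_support _).symm

theorem toPoly_C_mul (a : S) (x : R) : P.toPoly (P.C a * x) = Polynomial.C a * P.toPoly x := by
  conv_lhs => rw [← P.sum_C_mul_X_pow_eq x]
  conv_rhs => rw [as_sum_support (P.toPoly x)]
  simp only [Finset.mul_sum, ← mul_assoc, ← map_mul, map_sum, toPoly_C_mul_X_pow,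
    C_mul_monomial]

theorem toPoly_mul_X_pow (x : R) (k : ℕ) :
    P.toPoly (x * P.X ^ k) = P.toPoly x * Polynomial.X ^ k := by
  conv_lhs => rw [← P.sum_C_mul_X_pow_eq x]
  conv_rhs => rw [as_sum_support (P.toPoly x)]
  simp only [Finset.sum_mul, mul_assoc, ← pow_add, map_sum, toPoly_C_mul_X_pow,
    monomial_mul_X_pow]

theorem deg_mul_X_pow_lt {x : R} {n : ℕ} (hx : P.deg x < n) (k : ℕ) :
    P.deg (x * P.X ^ k) < ↑(n + k) := by
  rw [deg_eq_degree, toPoly_mul_X_pow]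
  calc _ ≤ P.deg x + (Polynomial.X ^ k : S[X]).degree := degree_mul_le _ _
    _ ≤ P.deg x + k := by gcongr; exact degree_X_pow_le k
    _ < n + k := WithBot.add_lt_add_right (WithBot.natCast_ne_bot k) hx
    _ = ↑(n + k) := by push_cast; rfl

theorem deg_X_pow_mul_C_sub_lt (i : ℕ) (b : S) :
    P.deg (P.X ^ i * P.C b - P.C ((σ ^ i) b) * P.X ^ i) < i := by
  induction i generalizing b with
  | zero => simp [deg_eq_degree]
  | succ i ih =>
    have hσ : (σ ^ (i + 1)) b = (σ ^ i) (σ b) := by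
      rw [RingHom.coe_pow, RingHom.coe_pow, Function.iterate_succ_apply]
    have key : P.X ^ (i + 1) * P.C b - P.C ((σ ^ (i + 1)) b) * P.X ^ (i + 1) =
        (P.X ^ i * P.C (σ b) - P.C ((σ ^ i) (σ b)) * P.X ^ i) * P.X ^ 1 +
          ((P.X ^ i * P.C (δ b) - P.C ((σ ^ i) (δ b)) * P.X ^ i) +
            P.C ((σ ^ i) (δ b)) * P.X ^ i) := by
      rw [pow_succ, mul_assoc, X_mul, hσ]
      noncomm_ring
    have hi : (i : WithBot ℕ) < ↑(i + 1) := by exact_mod_cast i.lt_succ_self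
    rw [key, deg_eq_degree, map_add, map_add, toPoly_C_mul_X_pow]
    refine (degree_add_le _ _).trans_lt (max_lt (P.deg_mul_X_pow_lt (ih (σ b)) 1)
      ((degree_add_le _ _).trans_lt (max_lt ((ih (δ b)).trans hi) ?_)))
    exact (degree_monomial_le _ _).trans_lt hi

theorem X_pow_mul_eq_sum (i : ℕ) (y : R) :
    P.X ^ i * y = ∑ j ∈ (P.toPoly y).support,
      (P.C ((σ ^ i) ((P.toPoly y).coeff j)) * P.X ^ (i + j) +
        (P.X ^ i * P.C ((P.toPoly y).coeff j) - P.C ((σ ^ i) ((P.toPoly y).coeff j)) * P.X ^ i) *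
          P.X ^ j) := by
  conv_lhs => rw [← P.sum_C_mul_X_pow_eq y]
  rw [Finset.mul_sum]
  refine Finset.sum_congr rfl fun j _ => ?_
  rw [sub_mul, mul_assoc, mul_assoc, ← pow_add, add_sub_cancel]

theorem deg_X_pow_mul_le (i : ℕ) (y : R) : P.deg (P.X ^ i * y) ≤ i + P.deg y := by
  rw [X_pow_mul_eq_sum, deg_eq_degree, map_sum]
  refine (degree_sum_le _ _).trans (Finset.sup_le fun j hj => ?_)
  have hj : ((i + j : ℕ) : WithBot ℕ) ≤ i + P.deg y := by
    rw [Nat.cast_add]; gcongr; exact le_degree_of_mem_supp j hj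
  rw [map_add, toPoly_C_mul_X_pow]
  exact (degree_add_le _ _).trans (max_le ((degree_monomial_le _ _).trans hj)
    ((P.deg_mul_X_pow_lt (P.deg_X_pow_mul_C_sub_lt _ _) j).le.trans hj))

theorem coeff_X_pow_mul_add {y : R} {e : ℕ} (hy : P.deg y ≤ e) (i : ℕ) :
    (P.toPoly (P.X ^ i * y)).coeff (i + e) = (σ ^ i) ((P.toPoly y).coeff e) := by
  rw [X_pow_mul_eq_sum, map_sum, finsetSum_coeff]
  have hlow : ∀ j ∈ (P.toPoly y).support, ∀ r : R, P.deg r < i →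
      (P.toPoly (r * P.X ^ j)).coeff (i + e) = 0 := fun j hj r hr => by
    refine coeff_eq_zero_of_degree_lt ((P.deg_mul_X_pow_lt hr j).trans_le ?_)
    have hje : j ≤ e := WithBot.coe_le_coe.1 ((le_degree_of_mem_supp j hj).trans hy)
    exact_mod_cast Nat.add_le_add_left hje i
  simp only [map_add, coeff_add, toPoly_C_mul_X_pow, coeff_monomial, Nat.add_left_cancel_iff]
  rw [Finset.sum_congr rfl fun j hj => by rw [hlow j hj _ (P.deg_X_pow_mul_C_sub_lt i _), add_zero],
    Finset.sum_ite_eq']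
  split_ifs with he
  · rfl
  · rw [notMem_support_iff.1 he, map_zero]

theorem deg_C_mul_le (a : S) (x : R) : P.deg (P.C a * x) ≤ P.deg x := by
  rw [deg_eq_degree, toPoly_C_mul]
  calc _ ≤ (Polynomial.C a).degree + P.deg x := degree_mul_le _ _
    _ ≤ 0 + P.deg x := by gcongr; exact degree_C_le
    _ = P.deg x := zero_add _

theorem mul_eq_sum_C_mul_X_pow_mul (x y : R) :
    x * y = ∑ i ∈ (P.toPoly x).support, P.C ((P.toPoly x).coeff i) * (P.X ^ i * y) := by
  conv_lhs => rw [← P.sum_C_mul_X_pow_eq x]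
  simp only [Finset.sum_mul, mul_assoc]

theorem deg_mul_le (x y : R) : P.deg (x * y) ≤ P.deg x + P.deg y := by
  rw [P.mul_eq_sum_C_mul_X_pow_mul, deg_eq_degree, map_sum]
  refine (degree_sum_le _ _).trans (Finset.sup_le fun i hi => ?_)
  calc _ ≤ P.deg (P.X ^ i * y) := P.deg_C_mul_le _ _
    _ ≤ i + P.deg y := P.deg_X_pow_mul_le i y
    _ ≤ P.deg x + P.deg y := by gcongr; exact le_degree_of_mem_supp i hi

theorem coeff_mul_add {x y : R} {d e : ℕ} (hx : P.deg x ≤ d) (hy : P.deg y ≤ e) :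
    (P.toPoly (x * y)).coeff (d + e) =
      (P.toPoly x).coeff d * (σ ^ d) ((P.toPoly y).coeff e) := by
  rw [P.mul_eq_sum_C_mul_X_pow_mul, map_sum, finsetSum_coeff]
  simp only [toPoly_C_mul, coeff_C_mul]
  refine (Finset.sum_eq_single d (fun i hi hid => ?_) fun hd => ?_).trans
    (by rw [P.coeff_X_pow_mul_add hy])
  · have hid : i < d := lt_of_le_of_ne
      (WithBot.coe_le_coe.1 ((le_degree_of_mem_supp i hi).trans hx)) hid
    refine mul_eq_zero_of_right _ (coeff_eq_zero_of_degree_lt ?_)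
    calc P.deg (P.X ^ i * y) ≤ i + P.deg y := P.deg_X_pow_mul_le i y
      _ ≤ i + e := by gcongr
      _ < ↑(d + e) := by exact_mod_cast Nat.add_lt_add_right hid e
  · rw [notMem_support_iff.1 hd, zero_mul]

end Ring

section DivisionRing

variable {S : Type*} [DivisionRing S] {σ : S →+* S} {δ : S → S} {R : Type*} [Ring R]
  (P : SkewPolyRing S σ δ R)

theorem deg_eq_natDegree {x : R} (hx : x ≠ 0) : P.deg x = (P.toPoly x).natDegree :=
  degree_eq_natDegree (P.toPoly_ne_zero hx)

theorem deg_mul (x y : R) : P.deg (x * y) = P.deg x + P.deg y := by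
  obtain rfl | hx := eq_or_ne x 0
  · simp [deg_eq_degree]
  obtain rfl | hy := eq_or_ne y 0
  · simp [deg_eq_degree]
  refine (P.deg_mul_le x y).antisymm ?_
  rw [P.deg_eq_natDegree hx, P.deg_eq_natDegree hy, ← Nat.cast_add]
  refine le_degree_of_ne_zero (p := P.toPoly (x * y)) ?_
  rw [P.coeff_mul_add (P.deg_eq_natDegree hx).le (P.deg_eq_natDegree hy).le]
  exact mul_ne_zero (P.lcoeff_ne_zero hx) ((_root_.map_ne_zero _).2 (P.lcoeff_ne_zero hy))

theorem lcoeff_mul (x y : R) :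
    P.lcoeff (x * y) = P.lcoeff x * (σ ^ (P.toPoly x).natDegree) (P.lcoeff y) := by
  obtain rfl | hx := eq_or_ne x 0
  · simp [lcoeff_eq_leadingCoeff]
  obtain rfl | hy := eq_or_ne y 0
  · simp [lcoeff_eq_leadingCoeff]
  have hnat : (P.toPoly (x * y)).natDegree = (P.toPoly x).natDegree + (P.toPoly y).natDegree :=
    natDegree_eq_of_degree_eq_some (p := P.toPoly _) <| by
      rw [← deg_eq_degree, deg_mul, P.deg_eq_natDegree hx, P.deg_eq_natDegree hy, Nat.cast_add]
  rw [lcoeff_eq_leadingCoeff, leadingCoeff, hnat,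
    P.coeff_mul_add (P.deg_eq_natDegree hx).le (P.deg_eq_natDegree hy).le]
  rfl

theorem le_deg_mul_left {q : R} (hq : q ≠ 0) (g : R) : P.deg g ≤ P.deg (q * g) := by
  rw [deg_mul]
  exact le_add_of_nonneg_left (zero_le_degree_iff.2 (P.toPoly_ne_zero hq))

theorem le_deg_mul_right (q : R) {g : R} (hg : g ≠ 0) : P.deg q ≤ P.deg (q * g) := by
  rw [deg_mul]
  exact le_add_of_nonneg_right (zero_le_degree_iff.2 (P.toPoly_ne_zero hg))

theorem exists_deg_sub_mul_lt {x g : R} (hx : x ≠ 0) (hg : g ≠ 0) (h : P.deg g ≤ P.deg x) :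
    ∃ M : R, P.deg (x - M * g) < P.deg x := by
  set k := (P.toPoly x).natDegree - (P.toPoly g).natDegree
  have hk : k + (P.toPoly g).natDegree = (P.toPoly x).natDegree :=
    Nat.sub_add_cancel (natDegree_le_natDegree h)
  have hσg : (σ ^ k) (P.lcoeff g) ≠ 0 := (_root_.map_ne_zero _).2 (P.lcoeff_ne_zero hg)
  set c := P.lcoeff x * ((σ ^ k) (P.lcoeff g))⁻¹
  have hc : c ≠ 0 := mul_ne_zero (P.lcoeff_ne_zero hx) (inv_ne_zero hσg)
  have hM : P.toPoly (P.C c * P.X ^ k) = monomial k c := P.toPoly_C_mul_X_pow c k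
  have hdeg : P.deg (P.C c * P.X ^ k * g) = P.deg x := by
    rw [deg_mul, deg_eq_degree, hM, degree_monomial _ hc, P.deg_eq_natDegree hg,
      P.deg_eq_natDegree hx, ← Nat.cast_add, hk]
  have hlc : P.lcoeff (P.C c * P.X ^ k * g) = P.lcoeff x := by
    rw [lcoeff_mul, hM, natDegree_monomial_eq _ hc, lcoeff_eq_leadingCoeff, hM,
      leadingCoeff_monomial, inv_mul_cancel_right₀ hσg]
  refine ⟨P.C c * P.X ^ k, ?_⟩
  rw [deg_eq_degree, map_sub]
  exact degree_sub_lt_left hdeg.symm (P.toPoly_ne_zero hx) hlc.symm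

theorem exists_eq_mul_add {g : R} (hg : g ≠ 0) (x : R) :
    ∃ q r : R, x = q * g + r ∧ P.deg r < P.deg g := by
  induction hd : P.deg x using WellFoundedLT.induction generalizing x with
  | ind d ih =>
    by_cases hlt : P.deg x < P.deg g
    · exact ⟨0, x, by rw [zero_mul, zero_add], hlt⟩
    have hx : x ≠ 0 := by
      rintro rfl
      exact hlt (P.deg_zero_lt hg)
    obtain ⟨M, hM⟩ := P.exists_deg_sub_mul_lt hx hg (not_lt.1 hlt)
    obtain ⟨q, r, hqr, hr⟩ := ih _ (hd ▸ hM) (x - M * g) rfl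
    exact ⟨q + M, r, by rw [add_mul, add_right_comm, ← hqr, sub_add_cancel], hr⟩

theorem eq_of_mul_add_eq_mul_add {g q₁ q₂ r₁ r₂ : R} (h : q₁ * g + r₁ = q₂ * g + r₂)
    (h₁ : P.deg r₁ < P.deg g) (h₂ : P.deg r₂ < P.deg g) : r₁ = r₂ := by
  have key : (q₁ - q₂) * g = r₂ - r₁ := by
    rw [sub_mul, sub_eq_sub_iff_add_eq_add, h, add_comm]
  obtain hq | hq := eq_or_ne (q₁ - q₂) 0
  · exact (sub_eq_zero.1 (by rw [← key, hq, zero_mul])).symm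
  have hlt : P.deg ((q₁ - q₂) * g) < P.deg g := by
    rw [key]
    exact P.deg_sub_lt h₂ h₁
  exact absurd (P.le_deg_mul_left hq g) hlt.not_ge

theorem modr_eq {f x q r : R} (h : x = q * f + r) (hr : P.deg r < P.deg f) : P.modr f x = r := by
  have hex : ∃ qr : R × R, x = qr.1 * f + qr.2 ∧ P.deg qr.2 < P.deg f := ⟨(q, r), h, hr⟩
  rw [modr, dif_pos hex]
  obtain ⟨hqr, hdeg⟩ := Classical.choose_spec hex
  exact P.eq_of_mul_add_eq_mul_add (hqr.symm.trans h) hdeg hr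

theorem pmul_eq_mul {f x y : R} (h : P.deg (x * y) < P.deg f) : P.pmul f x y = x * y :=
  P.modr_eq (zero_mul f ▸ (zero_add _).symm) h

theorem deg_C_mul {a : S} (ha : a ≠ 0) (x : R) : P.deg (P.C a * x) = P.deg x := by
  rw [deg_eq_degree, toPoly_C_mul, degree_C_mul ha, deg_eq_degree]

theorem lcoeff_C_mul {a : S} (ha : a ≠ 0) (x : R) : P.lcoeff (P.C a * x) = a * P.lcoeff x := by
  rw [lcoeff_eq_leadingCoeff, toPoly_C_mul, leadingCoeff, natDegree_C_mul ha, coeff_C_mul]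
  rfl

theorem leftMulSet_self {f : R} (hf : f ≠ 0) (m : ℕ) : P.leftMulSet f m f = {0} := by
  have hpmul : ∀ a, P.pmul f a f = 0 := fun a => P.modr_eq (add_zero _).symm (P.deg_zero_lt hf)
  ext x
  refine ⟨fun ⟨a, _, hx⟩ => hx.trans (hpmul a), fun hx => ?_⟩
  exact ⟨0, P.deg_zero ▸ WithBot.bot_lt_coe m, hx.trans (hpmul 0).symm⟩

namespace IsLeftIdeal

variable {P} {f : R} {m : ℕ} {I : Set R}

theorem exists_monic_forall_deg_lt (hI : P.IsLeftIdeal f m I) (hf : P.deg f = m)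
    (hI0 : ∃ x ∈ I, x ≠ 0) :
    ∃ g ∈ I, P.lcoeff g = 1 ∧ ∀ x ∈ I, P.deg x < P.deg g → x = 0 := by
  obtain ⟨hdegI, -, -, -, hmulI⟩ := hI
  obtain ⟨g, ⟨hgI, hg⟩, hmin⟩ :=
    (InvImage.wf P.deg wellFounded_lt).has_min {x | x ∈ I ∧ x ≠ 0} hI0
  have hc : (P.lcoeff g)⁻¹ ≠ 0 := inv_ne_zero (P.lcoeff_ne_zero hg)
  refine ⟨P.C (P.lcoeff g)⁻¹ * g, ?_, ?_, fun x hx hlt => ?_⟩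
  · have hdeg : P.deg (P.C (P.lcoeff g)⁻¹ * g) < P.deg f := by
      rw [P.deg_C_mul hc, hf]; exact hdegI g hgI
    rw [← P.pmul_eq_mul hdeg]
    exact hmulI _ ((P.le_deg_mul_right _ hg).trans_lt (hf ▸ hdeg)) g hgI
  · rw [P.lcoeff_C_mul hc, inv_mul_cancel₀ (P.lcoeff_ne_zero hg)]
  · rw [P.deg_C_mul hc] at hlt
    by_contra hx0
    exact hmin x ⟨hx, hx0⟩ hlt

theorem eq_leftMulSet (hI : P.IsLeftIdeal f m I) (hf : P.deg f = m) {g : R} (hgI : g ∈ I)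
    (hg : g ≠ 0) (hmin : ∀ x ∈ I, P.deg x < P.deg g → x = 0) : I = P.leftMulSet f m g := by
  obtain ⟨hdegI, -, haddI, hnegI, hmulI⟩ := hI
  ext x
  refine ⟨fun hx => ?_, fun ⟨a, ha, hx⟩ => hx ▸ hmulI a ha g hgI⟩
  obtain ⟨q, r, rfl, hr⟩ := P.exists_eq_mul_add hg x
  have hqg : P.deg (q * g) < P.deg f := by
    rw [← add_sub_cancel_right (q * g) r, hf]
    exact P.deg_sub_lt (hdegI _ hx) (hr.trans (hdegI g hgI))
  have hq : P.deg q < m := hf ▸ (P.le_deg_mul_right q hg).trans_lt hqg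
  have hqgI : q * g ∈ I := P.pmul_eq_mul hqg ▸ hmulI q hq g hgI
  have hrI : r ∈ I := neg_add_cancel_left (q * g) r ▸ haddI _ (hnegI _ hqgI) _ hx
  rw [hmin r hrI hr, add_zero]
  exact ⟨q, hq, (P.pmul_eq_mul hqg).symm⟩

theorem exists_eq_mul (hI : P.IsLeftIdeal f m I) (hf : P.deg f = m) {g : R} (hgI : g ∈ I)
    (hg : g ≠ 0) (hmin : ∀ x ∈ I, P.deg x < P.deg g → x = 0) : ∃ q, f = q * g := by
  obtain ⟨hdegI, hzeroI, -, hnegI, hmulI⟩ := hI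
  obtain ⟨q, r, hqr, hr⟩ := P.exists_eq_mul_add hg f
  refine ⟨q, ?_⟩
  suffices r = 0 by rw [hqr, this, add_zero]
  refine hmin r ?_ hr
  obtain rfl | hr0 := eq_or_ne r 0
  · exact hzeroI
  have hgf : P.deg g < P.deg f := hf ▸ hdegI g hgI
  have hrf : P.deg (-r) < P.deg f := P.deg_neg r ▸ hr.trans hgf
  have hq : P.deg q < m := by
    obtain rfl | hq0 := eq_or_ne q 0
    · exact P.deg_zero ▸ WithBot.bot_lt_coe m
    have hg0 : 0 < P.deg g := (zero_le_degree_iff.2 (P.toPoly_ne_zero hr0)).trans_lt hr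
    calc P.deg q = P.deg q + 0 := (add_zero _).symm
      _ < P.deg q + P.deg g := WithBot.add_lt_add_left (P.deg_eq_bot.not.2 hq0) hg0
      _ = P.deg (f - r) := by rw [← deg_mul, hqr, add_sub_cancel_right]
      _ = m := by rw [P.deg_sub_eq_left_of_deg_lt (hr.trans hgf), hf]
  have hpmul : P.pmul f q g = -r := P.modr_eq (by rw [hqr, one_mul]; abel) hrf
  have hnegr : -r ∈ I := hpmul ▸ hmulI q hq g hgI
  simpa only [neg_neg] using hnegI _ hnegr

end IsLeftIdeal

end DivisionRing

end SkewPolyRing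

theorem petit_left_ideal_principal_of_divisionRing_general {S R : Type*} [DivisionRing S] [Ring R]
    (σ : S →+* S) (δ : S → S)
    (P : SkewPolyRing S σ δ R) (f : R) (m : ℕ) (hf : P.Monic f m)
    (I : Set R) (hI : P.IsLeftIdeal f m I) :
    ∃ g q : R, f = q * g ∧ P.lcoeff g = 1 ∧ I = P.leftMulSet f m g := by
  have hdeg : P.deg f = m := hf.1
  by_cases hI0 : ∃ x ∈ I, x ≠ 0
  · obtain ⟨g, hgI, hg1, hmin⟩ := hI.exists_monic_forall_deg_lt hdeg hI0
    have hg : g ≠ 0 := by rintro rfl; simp [SkewPolyRing.lcoeff_eq_leadingCoeff] at hg1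
    obtain ⟨q, hq⟩ := hI.exists_eq_mul hdeg hgI hg hmin
    exact ⟨g, q, hq, hg1, hI.eq_leftMulSet hdeg hgI hg hmin⟩
  · push Not at hI0
    refine ⟨f, 1, (one_mul f).symm, hf.lcoeff_eq_one, ?_⟩
    rw [P.leftMulSet_self hf.ne_zero]
    exact Set.eq_singleton_iff_unique_mem.2 ⟨hI.2.1, hI0⟩

/-- over a division ring every left ideal of `S_f` is principal,
generated by a monic right divisor of `f`. -/
theorem petit_left_ideal_principal_of_divisionRing {S R : Type*} [DivisionRing S] [Ring R]
    (σ : S →+* S) (hσ : Function.Injective σ)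
    (δ : S → S) (hδ : IsLeftSigmaDerivation σ δ)
    (P : SkewPolyRing S σ δ R) (f : R) (m : ℕ) (hf : P.Monic f m)
    (I : Set R) (hI : P.IsLeftIdeal f m I) :
    ∃ g q : R, f = q * g ∧ P.lcoeff g = 1 ∧ I = P.leftMulSet f m g :=
  petit_left_ideal_principal_of_divisionRing_general σ δ P f m hf I hI
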